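/- Let v solve the Goursat integral equation v = v₀ + Vv. Then for each fixed ξ, v(ξ,·) is absolutely continuous in η and v_η(ξ,η) = −(1/4) q(η/2) − (1/4)∫₀^ξ q((η−ξ₁)/2) v(ξ₁,η) dξ₁ for a.e. η ∈ [ξ,T]. -/

import Mathlib

open MeasureTheory Set

abbrev MatC (n : ℕ) := EuclideanSpace ℂ (Fin n) →L[ℂ] EuclideanSpace ℂ (Fin n)

noncomputable def v0fun (n : ℕ) (q : ℝ → MatC n) (ξ η : ℝ) : MatC n :=
  -((1 / 2 : ℂ) • ∫ s in (ξ / 2)..(η / 2), q s)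

noncomputable def Vop (n : ℕ) (q : ℝ → MatC n) (v : ℝ → ℝ → MatC n) :
    ℝ → ℝ → MatC n :=
  fun ξ η => -((1 / 4 : ℂ) • ∫ ξ₁ in (0:ℝ)..ξ, ∫ η₁ in ξ..η, q ((η₁ - ξ₁) / 2) * v ξ₁ η₁)

/-- The claimed a.e. `η`-derivative of `v(ξ,·)`. -/
noncomputable def vEta (n : ℕ) (q : ℝ → MatC n) (v : ℝ → ℝ → MatC n) (ξ η : ℝ) : MatC n :=
  -((1 / 4 : ℂ) • q (η / 2))
    - (1 / 4 : ℂ) • (∫ ξ₁ in (0:ℝ)..ξ, q ((η - ξ₁) / 2) * v ξ₁ η)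

/-! Both terms of `v = v₀ + Vv` are indefinite integrals in `η`. For `v₀` this is the
substitution `s = 2t`. For `Vv` it is Fubini on the rectangle `(0, ξ] × (ξ, η]`, which applies
because the kernel `q((η₁ - ξ₁)/2)` is integrable there (the shear `(x, y) ↦ (x, y - x)` turns it
into a function of one variable) and `v` is bounded on the compact triangle. Hence `v(ξ, ·)` is the
integral of `vEta`, and the Lebesgue differentiation theorem gives its a.e. derivative. -/

section

variable {E : Type*} [NormedAddCommGroup E]

theorem integrable_comp_half_sub_prod {g : ℝ → E} (hg : Integrable g) (μ : Measure ℝ)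
    [IsFiniteMeasure μ] :
    Integrable (fun p : ℝ × ℝ => g ((p.2 - p.1) / 2)) (μ.prod volume) :=
  ((measurePreserving_prod_sub μ volume).integrable_comp_emb
    (MeasurableEquiv.shearSubRight ℝ).measurableEmbedding (g := fun p => g (p.2 / 2))).2
    ((hg.comp_div two_ne_zero).comp_snd μ)

theorem integrable_comp_half_sub_restrict_prod {g : ℝ → E} {T a b c : ℝ}
    (hg : IntegrableOn g (Icc 0 T)) (ha : 0 ≤ a) (hc : c ≤ T) :
    Integrable (fun p : ℝ × ℝ => g ((p.2 - p.1) / 2))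
      ((volume.restrict (Ioc a b)).prod (volume.restrict (Ioc b c))) := by
  have h := (integrable_comp_half_sub_prod (hg.integrable_indicator measurableSet_Icc)
    (volume.restrict (Ioc a b))).restrict (s := univ ×ˢ Ioc b c)
  rw [← Measure.prod_restrict, Measure.restrict_univ] at h
  refine h.congr ?_
  rw [Measure.prod_restrict, ← Measure.volume_eq_prod]
  filter_upwards [ae_restrict_mem (measurableSet_Ioc.prod measurableSet_Ioc)]
    with ⟨x, y⟩ ⟨hx, hy⟩
  refine indicator_of_mem (show _ ∈ Icc (0 : ℝ) T from ⟨?_, ?_⟩) g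
    <;> linarith [hx.1, hx.2, hy.1, hy.2]

theorem integrableOn_comp_half {g : ℝ → E} {T ξ η : ℝ} (hg : IntegrableOn g (Icc 0 T))
    (hξ : 0 ≤ ξ) (hη : η ≤ T) : IntegrableOn (fun s => g (s / 2)) (Ioc ξ η) := by
  refine ((hg.integrable_indicator measurableSet_Icc).comp_div two_ne_zero).integrableOn.congr_fun
    (fun s hs => indicator_of_mem (show _ ∈ Icc (0 : ℝ) T from ⟨?_, ?_⟩) g) measurableSet_Ioc
    <;> linarith [hs.1, hs.2]

end

def goursatTriangle (T : ℝ) : Set (ℝ × ℝ) := {p : ℝ × ℝ | 0 ≤ p.1 ∧ p.1 ≤ p.2 ∧ p.2 ≤ T}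

theorem isCompact_goursatTriangle (T : ℝ) : IsCompact (goursatTriangle T) := by
  refine (isCompact_Icc (a := ((0 : ℝ), (0 : ℝ))) (b := (T, T))).of_isClosed_subset ?_ ?_
  · exact (isClosed_le continuous_const continuous_fst).inter
      ((isClosed_le continuous_fst continuous_snd).inter
        (isClosed_le continuous_snd continuous_const))
  · rintro ⟨x, y⟩ ⟨h1, h2, h3⟩
    exact ⟨⟨h1, h1.trans h2⟩, ⟨h2.trans h3, h3⟩⟩

section

variable {A : Type*} [NormedRing A] {g : ℝ → A} {u : ℝ → ℝ → A} {T ξ η : ℝ}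

theorem integrable_comp_half_sub_mul (hg : IntegrableOn g (Icc 0 T))
    (hu : ContinuousOn (fun p : ℝ × ℝ => u p.1 p.2) (goursatTriangle T))
    (hη : η ≤ T) :
    Integrable (fun p : ℝ × ℝ => g ((p.2 - p.1) / 2) * u p.1 p.2)
      ((volume.restrict (Ioc 0 ξ)).prod (volume.restrict (Ioc ξ η))) := by
  obtain ⟨C, hC⟩ := (isCompact_goursatTriangle T).exists_bound_of_continuousOn hu
  have hsub : Ioc 0 ξ ×ˢ Ioc ξ η ⊆ goursatTriangle T :=
    fun p ⟨hx, hy⟩ => ⟨hx.1.le, hx.2.trans hy.1.le, hy.2.trans hη⟩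
  have hmeas : MeasurableSet (Ioc 0 ξ ×ˢ Ioc ξ η) := measurableSet_Ioc.prod measurableSet_Ioc
  have hK := integrable_comp_half_sub_restrict_prod hg le_rfl hη (b := ξ)
  rw [Measure.prod_restrict, ← Measure.volume_eq_prod] at hK ⊢
  exact hK.mul_bdd ((hu.mono hsub).aestronglyMeasurable hmeas)
    (ae_restrict_of_forall_mem hmeas fun p hp => hC p (hsub hp))

theorem integrableOn_integral_comp_half_sub_mul [NormedSpace ℝ A]
    (hg : IntegrableOn g (Icc 0 T))
    (hu : ContinuousOn (fun p : ℝ × ℝ => u p.1 p.2) (goursatTriangle T))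
    (hξ : 0 ≤ ξ) (hη : η ≤ T) :
    IntegrableOn (fun s => ∫ x in (0 : ℝ)..ξ, g ((s - x) / 2) * u x s) (Ioc ξ η) := by
  simp_rw [intervalIntegral.integral_of_le hξ]
  exact (integrable_comp_half_sub_mul hg hu hη).integral_prod_right

end

section

variable {n : ℕ} {q : ℝ → MatC n} {v : ℝ → ℝ → MatC n} {T ξ η : ℝ}

theorem v0fun_eq_integral :
    v0fun n q ξ η = ∫ s in ξ..η, -((1 / 4 : ℂ) • q (s / 2)) := by
  rw [intervalIntegral.integral_neg, intervalIntegral.integral_smul,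
    intervalIntegral.integral_comp_div q two_ne_zero, v0fun, ← Complex.coe_smul, smul_smul]
  norm_num

theorem Vop_eq_integral (hq : IntegrableOn q (Icc 0 T))
    (hv : ContinuousOn (fun p : ℝ × ℝ => v p.1 p.2) (goursatTriangle T))
    (hξ : 0 ≤ ξ) (hξη : ξ ≤ η) (hη : η ≤ T) :
    Vop n q v ξ η = ∫ s in ξ..η, -((1 / 4 : ℂ) • ∫ x in (0 : ℝ)..ξ, q ((s - x) / 2) * v x s) := by
  rw [Vop, intervalIntegral.integral_neg, intervalIntegral.integral_smul]
  simp_rw [intervalIntegral.integral_of_le hξη, intervalIntegral.integral_of_le hξ]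
  rw [integral_integral_swap (integrable_comp_half_sub_mul hq hv hη)]

theorem integrableOn_vEta (hq : IntegrableOn q (Icc 0 T))
    (hv : ContinuousOn (fun p : ℝ × ℝ => v p.1 p.2) (goursatTriangle T))
    (hξ : 0 ≤ ξ) (hη : η ≤ T) :
    IntegrableOn (vEta n q v ξ) (Ioc ξ η) :=
  ((integrableOn_comp_half hq hξ hη).smul (1 / 4 : ℂ)).neg.sub
    ((integrableOn_integral_comp_half_sub_mul hq hv hξ hη).smul (1 / 4 : ℂ))

theorem eq_integral_vEta (hq : IntegrableOn q (Icc 0 T))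
    (hv : ContinuousOn (fun p : ℝ × ℝ => v p.1 p.2) (goursatTriangle T))
    (heq : ∀ ξ η : ℝ, 0 ≤ ξ → ξ ≤ η → η ≤ T → v ξ η = v0fun n q ξ η + Vop n q v ξ η)
    (hξ : 0 ≤ ξ) (hξη : ξ ≤ η) (hη : η ≤ T) :
    v ξ η = ∫ s in ξ..η, vEta n q v ξ s := by
  have h0 : IntervalIntegrable (fun s => -((1 / 4 : ℂ) • q (s / 2))) volume ξ η :=
    (intervalIntegrable_iff_integrableOn_Ioc_of_le hξη).2
      ((integrableOn_comp_half hq hξ hη).smul (1 / 4 : ℂ)).neg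
  have hV : IntervalIntegrable
      (fun s => -((1 / 4 : ℂ) • ∫ x in (0 : ℝ)..ξ, q ((s - x) / 2) * v x s)) volume ξ η :=
    (intervalIntegrable_iff_integrableOn_Ioc_of_le hξη).2
      ((integrableOn_integral_comp_half_sub_mul hq hv hξ hη).smul (1 / 4 : ℂ)).neg
  rw [heq ξ η hξ hξη hη, v0fun_eq_integral, Vop_eq_integral hq hv hξ hξη hη,
    ← intervalIntegral.integral_add h0 hV]
  rfl

end

theorem stmt9_general (n : ℕ) (q : ℝ → MatC n)
    (hq : LocallyIntegrableOn q (Ici (0 : ℝ))) (T : ℝ)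
    (v : ℝ → ℝ → MatC n)
    (hcont : ContinuousOn (fun p : ℝ × ℝ => v p.1 p.2)
        {p : ℝ × ℝ | 0 ≤ p.1 ∧ p.1 ≤ p.2 ∧ p.2 ≤ T})
    (heq : ∀ ξ η : ℝ, 0 ≤ ξ → ξ ≤ η → η ≤ T →
        v ξ η = v0fun n q ξ η + Vop n q v ξ η) :
    ∀ ξ ∈ Icc (0:ℝ) T,
      IntegrableOn (vEta n q v ξ) (Icc ξ T) ∧
      (∀ η ∈ Icc ξ T, v ξ η = v ξ ξ + ∫ s in ξ..η, vEta n q v ξ s) ∧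
      (∀ᵐ η ∂(volume.restrict (Icc ξ T)),
        HasDerivWithinAt (fun η' => v ξ η') (vEta n q v ξ η) (Icc ξ T) η) := by
  rintro ξ ⟨hξ, hξT⟩
  have hqT : IntegrableOn q (Icc 0 T) :=
    hq.integrableOn_compact_subset (fun _ hx => hx.1) isCompact_Icc
  have hrepr : ∀ η ∈ Icc ξ T, v ξ η = ∫ s in ξ..η, vEta n q v ξ s :=
    fun η hη => eq_integral_vEta hqT hcont heq hξ hη.1 hη.2
  have hint : IntervalIntegrable (vEta n q v ξ) volume ξ T :=
    (intervalIntegrable_iff_integrableOn_Ioc_of_le hξT).2 (integrableOn_vEta hqT hcont hξ le_rfl)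
  refine ⟨(integrableOn_Icc_iff_integrableOn_Ioc (f := vEta n q v ξ)).2
      (integrableOn_vEta hqT hcont hξ le_rfl),
    fun η hη => by rw [hrepr ξ (left_mem_Icc.2 hξT), intervalIntegral.integral_same, zero_add,
      hrepr η hη], ?_⟩
  filter_upwards [ae_restrict_of_ae hint.ae_hasDerivAt_integral, ae_restrict_mem measurableSet_Icc]
    with η hderiv hη
  rw [uIcc_of_le hξT] at hderiv
  exact (hderiv hη ξ (left_mem_Icc.2 hξT)).hasDerivWithinAt.congr hrepr (hrepr η hη)

/-- For the continuous solution `v` of the Goursat integral equation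
`v = v₀ + Vv`, for each fixed `ξ` the map `η ↦ v(ξ,η)` is absolutely continuous
(it is the indefinite integral of an integrable function) and
`v_η(ξ,η) = −(1/4)q(η/2) − (1/4)∫₀^ξ q((η−ξ₁)/2) v(ξ₁,η) dξ₁` for a.e. `η ∈ [ξ,T]`. -/
theorem stmt9 (n : ℕ) (q : ℝ → MatC n)
    (hq : LocallyIntegrableOn q (Ici (0 : ℝ))) (T : ℝ) (hT : 0 < T)
    (v : ℝ → ℝ → MatC n)
    (hcont : ContinuousOn (fun p : ℝ × ℝ => v p.1 p.2)
        {p : ℝ × ℝ | 0 ≤ p.1 ∧ p.1 ≤ p.2 ∧ p.2 ≤ T})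
    (heq : ∀ ξ η : ℝ, 0 ≤ ξ → ξ ≤ η → η ≤ T →
        v ξ η = v0fun n q ξ η + Vop n q v ξ η) :
    ∀ ξ ∈ Icc (0:ℝ) T,
      IntegrableOn (vEta n q v ξ) (Icc ξ T) ∧
      (∀ η ∈ Icc ξ T, v ξ η = v ξ ξ + ∫ s in ξ..η, vEta n q v ξ s) ∧
      (∀ᵐ η ∂(volume.restrict (Icc ξ T)),
        HasDerivWithinAt (fun η' => v ξ η') (vEta n q v ξ η) (Icc ξ T) η) :=
  stmt9_general n q hq T v hcont heq
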